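/- arXiv:2209.14502 — 5 statements merged into one kernel-verified Lean document; each statement's English description precedes it below -/
import Mathlib

section
/- Cross-quantile score covariance identity: let a, b : ℝ^d → ℝ be measurable functions with a(X) ≤ b(X) almost surely, and suppose E[1{y ≤ a(X)} | σ(X)] = τ₁ and E[1{y ≤ b(X)} | σ(X)] = τ₂ almost surely, where 0 < τ₁ ≤ τ₂ < 1. Then for all coordinates j, k: E[ (1{y ≤ a(X)} − τ₁)(1{y ≤ b(X)} − τ₂) X_j X_k ] = (min(τ₁, τ₂) − τ₁ τ₂) E[ X_j X_k ]. -/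
/-!
Since `a(X) ≤ b(X)`, the two indicators satisfy `1{y ≤ a(X)} · 1{y ≤ b(X)} = 1{y ≤ a(X)}`, so
the integrand expands to `(1 - τ₂) 1{y ≤ a(X)} X_j X_k - τ₁ 1{y ≤ b(X)} X_j X_k + τ₁ τ₂ X_j X_k`.
As `X_j X_k` is `σ(X)`-measurable, it can be pulled out of the conditional expectations, which
gives `E[1{y ≤ a(X)} X_j X_k] = τ₁ E[X_j X_k]` and `E[1{y ≤ b(X)} X_j X_k] = τ₂ E[X_j X_k]`.
-/

open MeasureTheory

theorem EuclideanSpace.norm_apply_mul_apply_le_norm_sq {ι : Type*} [Fintype ι]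
    (x : EuclideanSpace ℝ ι) (j k : ι) : ‖x j * x k‖ ≤ ‖x‖ ^ 2 := by
  rw [norm_mul, sq]
  exact mul_le_mul (PiLp.norm_apply_le x j) (PiLp.norm_apply_le x k) (norm_nonneg _)
    (norm_nonneg _)

section

variable {Ω : Type*} {m m₀ : MeasurableSpace Ω} {μ : Measure[m₀] Ω}

theorem integrable_apply_mul_apply {ι : Type*} [Fintype ι] {X : Ω → EuclideanSpace ℝ ι}
    (hX : AEStronglyMeasurable X μ) (hX2 : Integrable (fun ω => ‖X ω‖ ^ 2) μ) (j k : ι) :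
    Integrable (fun ω => X ω j * X ω k) μ :=
  hX2.mono' (by fun_prop)
    (ae_of_all _ fun ω => EuclideanSpace.norm_apply_mul_apply_le_norm_sq (X ω) j k)

theorem MeasureTheory.Integrable.ite_le_mul {u v g : Ω → ℝ} (hu : Measurable u) (hv : Measurable v)
    (hg : Integrable g μ) :
    Integrable (fun ω => (if u ω ≤ v ω then (1 : ℝ) else 0) * g ω) μ :=
  hg.bdd_mul (c := 1)
    (Measurable.ite (measurableSet_le hu hv) measurable_const measurable_const).aestronglyMeasurable
    (ae_of_all _ fun ω => by split_ifs <;> simp)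

theorem integrable_ite_le [IsFiniteMeasure μ] {u v : Ω → ℝ} (hu : Measurable u)
    (hv : Measurable v) : Integrable (fun ω => if u ω ≤ v ω then (1 : ℝ) else 0) μ := by
  simpa using (integrable_const (1 : ℝ)).ite_le_mul (μ := μ) hu hv

theorem integral_mul_eq_of_condExp_eq_const (hm : m ≤ m₀) [SigmaFinite (μ.trim hm)]
    {f g : Ω → ℝ} {c : ℝ} (hg : StronglyMeasurable[m] g) (hf : Integrable f μ)
    (hfg : Integrable (fun ω => f ω * g ω) μ) (hcond : μ[f | m] =ᵐ[μ] fun _ => c) :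
    ∫ ω, f ω * g ω ∂μ = c * ∫ ω, g ω ∂μ := by
  have hgf : Integrable (g * f) μ := hfg.congr (ae_of_all _ fun ω => mul_comm _ _)
  have hpull : μ[g * f | m] =ᵐ[μ] fun ω => g ω * c := by
    filter_upwards [condExp_mul_of_stronglyMeasurable_left hg hgf hf, hcond] with ω h h'
    rw [h, Pi.mul_apply, h']
  calc ∫ ω, f ω * g ω ∂μ = ∫ ω, (g * f) ω ∂μ := by simp only [Pi.mul_apply, mul_comm]
    _ = ∫ ω, μ[g * f | m] ω ∂μ := (integral_condExp hm).symm
    _ = ∫ ω, g ω * c ∂μ := integral_congr_ae hpull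
    _ = c * ∫ ω, g ω ∂μ := by rw [integral_mul_const, mul_comm]

theorem integral_sub_mul_sub_mul_of_mul_eq_left {f₁ f₂ g : Ω → ℝ} {c₁ c₂ : ℝ}
    (hf₁f₂ : ∀ᵐ ω ∂μ, f₁ ω * f₂ ω = f₁ ω) (hg : Integrable g μ)
    (hf₁g : Integrable (fun ω => f₁ ω * g ω) μ) (hf₂g : Integrable (fun ω => f₂ ω * g ω) μ)
    (h₁ : ∫ ω, f₁ ω * g ω ∂μ = c₁ * ∫ ω, g ω ∂μ)
    (h₂ : ∫ ω, f₂ ω * g ω ∂μ = c₂ * ∫ ω, g ω ∂μ) :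
    ∫ ω, (f₁ ω - c₁) * ((f₂ ω - c₂) * g ω) ∂μ = (c₁ - c₁ * c₂) * ∫ ω, g ω ∂μ := by
  have hexpand : ∀ᵐ ω ∂μ, (f₁ ω - c₁) * ((f₂ ω - c₂) * g ω)
      = (1 - c₂) * (f₁ ω * g ω) - c₁ * (f₂ ω * g ω) + c₁ * c₂ * g ω := by
    filter_upwards [hf₁f₂] with ω h
    linear_combination g ω * h
  have hdiff : Integrable (fun ω => (1 - c₂) * (f₁ ω * g ω) - c₁ * (f₂ ω * g ω)) μ :=
    (hf₁g.const_mul _).sub (hf₂g.const_mul _)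
  rw [integral_congr_ae hexpand, integral_add hdiff (hg.const_mul _), integral_sub (hf₁g.const_mul _) (hf₂g.const_mul _),
    integral_const_mul, integral_const_mul, integral_const_mul, h₁, h₂]
  ring

end

theorem ite_le_mul_ite_le_of_le {t a b : ℝ} (hab : a ≤ b) :
    (if t ≤ a then (1 : ℝ) else 0) * (if t ≤ b then 1 else 0) = if t ≤ a then 1 else 0 := by
  by_cases h : t ≤ a
  · simp [h, h.trans hab]
  · simp [h]

theorem qr_cross_quantile_score_covariance_general {Ω : Type*} [MeasurableSpace Ω] (P : Measure Ω)
    [IsProbabilityMeasure P] (d : ℕ)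
    (X : Ω → EuclideanSpace ℝ (Fin d)) (y : Ω → ℝ)
    (hX : Measurable X) (hy : Measurable y)
    (hX2 : Integrable (fun ω => ‖X ω‖ ^ 2) P)
    (a b : EuclideanSpace ℝ (Fin d) → ℝ) (ha : Measurable a) (hb : Measurable b)
    (hab : ∀ᵐ ω ∂P, a (X ω) ≤ b (X ω))
    (τ₁ τ₂ : ℝ) (hτ₁₂ : τ₁ ≤ τ₂)
    (hcond₁ : P[(fun ω => if y ω ≤ a (X ω) then (1 : ℝ) else 0) |
        MeasurableSpace.comap X inferInstance] =ᵐ[P] fun _ => τ₁)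
    (hcond₂ : P[(fun ω => if y ω ≤ b (X ω) then (1 : ℝ) else 0) |
        MeasurableSpace.comap X inferInstance] =ᵐ[P] fun _ => τ₂) :
    ∀ j k : Fin d,
      ∫ ω, ((if y ω ≤ a (X ω) then (1 : ℝ) else 0) - τ₁) *
            (((if y ω ≤ b (X ω) then (1 : ℝ) else 0) - τ₂) * (X ω j * X ω k)) ∂P
        = (min τ₁ τ₂ - τ₁ * τ₂) * ∫ ω, X ω j * X ω k ∂P := by
  intro j k
  have hXσ : Measurable[MeasurableSpace.comap X inferInstance] X := comap_measurable X
  have hg_sm : StronglyMeasurable[MeasurableSpace.comap X inferInstance]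
      (fun ω => X ω j * X ω k) := by fun_prop
  have hg := integrable_apply_mul_apply hX.aestronglyMeasurable hX2 j k
  have haX := ha.comp hX
  have hbX := hb.comp hX
  rw [min_eq_left hτ₁₂]
  refine integral_sub_mul_sub_mul_of_mul_eq_left
    (hab.mono fun ω => ite_le_mul_ite_le_of_le) hg (hg.ite_le_mul hy haX) (hg.ite_le_mul hy hbX)
    ?_ ?_
  · exact integral_mul_eq_of_condExp_eq_const hX.comap_le hg_sm (integrable_ite_le hy haX)
      (hg.ite_le_mul hy haX) hcond₁
  · exact integral_mul_eq_of_condExp_eq_const hX.comap_le hg_sm (integrable_ite_le hy hbX)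
      (hg.ite_le_mul hy hbX) hcond₂

/-- Cross-quantile score covariance identity.  If `a(X) ≤ b(X)` a.s.,
`E[1{y ≤ a(X)} | σ(X)] = τ₁` and `E[1{y ≤ b(X)} | σ(X)] = τ₂` a.s., with
`0 < τ₁ ≤ τ₂ < 1`, then for all coordinates `j, k`,
`E[(1{y ≤ a(X)} − τ₁)(1{y ≤ b(X)} − τ₂) X_j X_k] = (min(τ₁,τ₂) − τ₁τ₂) E[X_j X_k]`. -/
theorem qr_cross_quantile_score_covariance {Ω : Type*} [MeasurableSpace Ω] (P : Measure Ω)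
    [IsProbabilityMeasure P] (d : ℕ)
    (X : Ω → EuclideanSpace ℝ (Fin d)) (y : Ω → ℝ)
    (hX : Measurable X) (hy : Measurable y)
    (hX2 : Integrable (fun ω => ‖X ω‖ ^ 2) P)
    (a b : EuclideanSpace ℝ (Fin d) → ℝ) (ha : Measurable a) (hb : Measurable b)
    (hab : ∀ᵐ ω ∂P, a (X ω) ≤ b (X ω))
    (τ₁ τ₂ : ℝ) (hτ₁ : 0 < τ₁) (hτ₁₂ : τ₁ ≤ τ₂) (hτ₂ : τ₂ < 1)
    (hcond₁ : P[(fun ω => if y ω ≤ a (X ω) then (1 : ℝ) else 0) |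
        MeasurableSpace.comap X inferInstance] =ᵐ[P] fun _ => τ₁)
    (hcond₂ : P[(fun ω => if y ω ≤ b (X ω) then (1 : ℝ) else 0) |
        MeasurableSpace.comap X inferInstance] =ᵐ[P] fun _ => τ₂) :
    ∀ j k : Fin d,
      ∫ ω, ((if y ω ≤ a (X ω) then (1 : ℝ) else 0) - τ₁) *
            (((if y ω ≤ b (X ω) then (1 : ℝ) else 0) - τ₂) * (X ω j * X ω k)) ∂P
        = (min τ₁ τ₂ - τ₁ * τ₂) * ∫ ω, X ω j * X ω k ∂P :=
  qr_cross_quantile_score_covariance_general P d X y hX hy hX2 a b ha hb hab τ₁ τ₂ hτ₁₂ hcond₁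
    hcond₂
end

section
/- The true parameter minimizes the population check loss: if κ x((−∞, ⟨x, β*⟩]) = τ for ν-almost every x, then for every β ∈ ℝ^d, ∫ [ ρ_τ(y − ⟨x, β⟩) − ρ_τ(y − ⟨x, β*⟩) ] dμ(x, y) ≥ 0; the integrand is μ-integrable since its absolute value is bounded by ‖x‖‖β − β*‖. -/
open MeasureTheory ProbabilityTheory
open scoped RealInnerProductSpace ENNReal

noncomputable def checkFn (τ u : ℝ) : ℝ := u * (τ - if u ≤ 0 then 1 else 0)

/-! The check loss is convex with subgradient `τ - 1{u ≤ 0}` at `u`, so the excess loss at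
`(x, y)` is bounded below by `⟪x, β* - β⟫ (τ - 1{y ≤ ⟪x, β*⟫})`. Conditionally on `x`, the
second factor has mean `τ - κ x (Iic ⟪x, β*⟫) = 0`, so this lower bound integrates to zero.
Both functions are dominated by `‖x‖ ‖β* - β‖`, which is integrable by the moment assumption. -/

open Set

noncomputable def checkSubgrad (τ u : ℝ) : ℝ := τ - if u ≤ 0 then 1 else 0

lemma checkSubgrad_mul_sub_le_checkFn_sub (τ u v : ℝ) :
    checkSubgrad τ u * (v - u) ≤ checkFn τ v - checkFn τ u := by
  unfold checkFn checkSubgrad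
  split_ifs <;> nlinarith

lemma abs_checkSubgrad_le_one {τ : ℝ} (hτ : τ ∈ Icc (0 : ℝ) 1) (u : ℝ) :
    |checkSubgrad τ u| ≤ 1 := by
  unfold checkSubgrad
  rw [abs_le]
  split_ifs <;> constructor <;> linarith [hτ.1, hτ.2]

lemma abs_checkSubgrad_mul_le {τ : ℝ} (hτ : τ ∈ Icc (0 : ℝ) 1) (u t : ℝ) :
    |checkSubgrad τ u * t| ≤ |t| := by
  rw [abs_mul]
  exact mul_le_of_le_one_left (abs_nonneg t) (abs_checkSubgrad_le_one hτ u)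

lemma abs_checkFn_sub_le {τ : ℝ} (hτ : τ ∈ Icc (0 : ℝ) 1) (u v : ℝ) :
    |checkFn τ v - checkFn τ u| ≤ |v - u| := by
  rw [abs_le]
  constructor <;> linarith [checkSubgrad_mul_sub_le_checkFn_sub τ u v,
    checkSubgrad_mul_sub_le_checkFn_sub τ v u, neg_abs_le (checkSubgrad τ u * (v - u)),
    neg_abs_le (checkSubgrad τ v * (u - v)), abs_checkSubgrad_mul_le hτ u (v - u),
    abs_checkSubgrad_mul_le hτ v (u - v), abs_sub_comm u v]

@[fun_prop]
lemma measurable_checkSubgrad (τ : ℝ) : Measurable (checkSubgrad τ) :=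
  measurable_const.sub (Measurable.ite measurableSet_Iic measurable_const measurable_const)

@[fun_prop]
lemma measurable_checkFn (τ : ℝ) : Measurable (checkFn τ) :=
  measurable_id.mul (measurable_checkSubgrad τ)

lemma integral_checkSubgrad_sub_eq_zero {η : Measure ℝ} [IsProbabilityMeasure η] {τ c : ℝ}
    (hτ : 0 ≤ τ) (hc : η (Iic c) = ENNReal.ofReal τ) :
    ∫ y, checkSubgrad τ (y - c) ∂η = 0 := by
  have hind : (fun y => checkSubgrad τ (y - c)) = fun y => τ - (Iic c).indicator 1 y := by
    ext y
    simp [checkSubgrad, indicator_apply]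
  have hint : Integrable ((Iic c).indicator 1) η :=
    (integrable_const (1 : ℝ)).indicator measurableSet_Iic
  rw [hind, integral_sub (integrable_const τ) hint, integral_const,
    integral_indicator_one measurableSet_Iic]
  simp [measureReal_def, hc, ENNReal.toReal_ofReal hτ]

section CompProd

variable {α β : Type*} [MeasurableSpace α] [MeasurableSpace β] {ν : Measure α} [SFinite ν]
  {κ : Kernel α β}

lemma MeasureTheory.Integrable.comp_fst_compProd [IsMarkovKernel κ] {g : α → ℝ}
    (hg : Integrable g ν) : Integrable (fun z => g z.1) (ν.compProd κ) := by
  have : Integrable g (ν.compProd κ).fst := by rwa [Measure.fst_compProd]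
  exact this.comp_measurable measurable_fst

lemma integral_compProd_mul_eq_zero [IsSFiniteKernel κ] {a : α → ℝ} {h : α → β → ℝ}
    (hint : Integrable (fun z => a z.1 * h z.1 z.2) (ν.compProd κ))
    (hzero : ∀ᵐ x ∂ν, ∫ y, h x y ∂κ x = 0) :
    ∫ z, a z.1 * h z.1 z.2 ∂ν.compProd κ = 0 := by
  rw [Measure.integral_compProd hint]
  exact integral_eq_zero_of_ae (hzero.mono fun x hx => by
    simp only [integral_const_mul, hx, mul_zero, Pi.zero_apply])

end CompProd

/-- The true parameter minimizes the population check loss.  If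
`κ x((−∞, ⟨x, β*⟩]) = τ` for `ν`-a.e. `x`, then for every `β`,
`∫ [ρ_τ(y − ⟨x, β⟩) − ρ_τ(y − ⟨x, β*⟩)] dμ ≥ 0` with `μ = ν ⊗ₖ κ`. -/
theorem qr_population_minimizer (d : ℕ) (τ : ℝ) (hτ : τ ∈ Set.Ioo (0 : ℝ) 1)
    (ν : Measure (EuclideanSpace ℝ (Fin d))) [IsProbabilityMeasure ν]
    (hνmom : Integrable (fun x => ‖x‖) ν)
    (κ : Kernel (EuclideanSpace ℝ (Fin d)) ℝ) [IsMarkovKernel κ]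
    (βstar : EuclideanSpace ℝ (Fin d))
    (hquant : ∀ᵐ x ∂ν, κ x (Set.Iic ⟪x, βstar⟫) = ENNReal.ofReal τ) :
    ∀ β : EuclideanSpace ℝ (Fin d),
      0 ≤ ∫ z : EuclideanSpace ℝ (Fin d) × ℝ,
            (checkFn τ (z.2 - ⟪z.1, β⟫) - checkFn τ (z.2 - ⟪z.1, βstar⟫))
          ∂(ν.compProd κ) := by
  intro β
  have hτIcc := Ioo_subset_Icc_self hτ
  have hdiff (z : EuclideanSpace ℝ (Fin d) × ℝ) :
      (z.2 - ⟪z.1, β⟫) - (z.2 - ⟪z.1, βstar⟫) = ⟪z.1, βstar - β⟫ := by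
    rw [inner_sub_right]; ring
  have hdom : Integrable (fun z : EuclideanSpace ℝ (Fin d) × ℝ => ‖z.1‖ * ‖βstar - β‖)
      (ν.compProd κ) := (hνmom.mul_const _).comp_fst_compProd
  have hinner (z : EuclideanSpace ℝ (Fin d) × ℝ) :
      ‖⟪z.1, βstar - β⟫‖ ≤ ‖‖z.1‖ * ‖βstar - β‖‖ := by
    rw [Real.norm_eq_abs, norm_mul, norm_norm, norm_norm]
    exact abs_real_inner_le_norm _ _
  have hlin_int : Integrable (fun z : EuclideanSpace ℝ (Fin d) × ℝ =>
      ⟪z.1, βstar - β⟫ * checkSubgrad τ (z.2 - ⟪z.1, βstar⟫)) (ν.compProd κ) :=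
    hdom.mono (by fun_prop) (.of_forall fun z => by
      rw [mul_comm]; exact (abs_checkSubgrad_mul_le hτIcc _ _).trans (hinner z))
  have hexcess_int : Integrable (fun z : EuclideanSpace ℝ (Fin d) × ℝ =>
      checkFn τ (z.2 - ⟪z.1, β⟫) - checkFn τ (z.2 - ⟪z.1, βstar⟫)) (ν.compProd κ) :=
    hdom.mono (by fun_prop) (.of_forall fun z =>
      (abs_checkFn_sub_le hτIcc _ _).trans (hdiff z ▸ hinner z))
  calc (0 : ℝ)
      = ∫ z, ⟪z.1, βstar - β⟫ * checkSubgrad τ (z.2 - ⟪z.1, βstar⟫) ∂ν.compProd κ :=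
        (integral_compProd_mul_eq_zero (a := fun x => ⟪x, βstar - β⟫) hlin_int
          (hquant.mono fun _ hx => integral_checkSubgrad_sub_eq_zero hτ.1.le hx)).symm
    _ ≤ _ := integral_mono hlin_int hexcess_int fun z => by
        simpa only [mul_comm, hdiff] using
          checkSubgrad_mul_sub_le_checkFn_sub τ (z.2 - ⟪z.1, βstar⟫) (z.2 - ⟪z.1, β⟫)
end

section
/- Differentiability of the one-dimensional expected check loss: let m be a probability measure on ℝ with ∫ |e| dm(e) < ∞, and define ψ(t) := ∫ ρ_τ(e − t) dm(e). If m({t₀}) = 0, then ψ is differentiable at t₀ with derivative ψ′(t₀) = m((−∞, t₀]) − τ. -/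
open MeasureTheory

/-!
Writing `ρ_τ(u) = τ u - min u 0` shows that `ρ_τ` is Lipschitz, so `t ↦ ρ_τ(e - t)` is
dominated by a constant Lipschitz bound and the integral may be differentiated under the integral
sign. Away from `u = 0` the loss is linear with slope `τ - 1{u ≤ 0}`, so the integrand has
derivative `1{e ≤ t₀} - τ` at `t₀` for every `e ≠ t₀`, i.e. `m`-almost everywhere since
`m {t₀} = 0`; integrating gives `m (-∞, t₀] - τ`.
-/

theorem checkFn_eq_mul_sub_min (τ u : ℝ) : checkFn τ u = τ * u - min u 0 := by
  unfold checkFn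
  split_ifs with hu
  · rw [min_eq_left hu]; ring
  · rw [min_eq_right (not_le.mp hu).le]; ring

theorem lipschitzWith_checkFn (τ : ℝ) : LipschitzWith (‖τ‖₊ + 1) (checkFn τ) := by
  rw [show checkFn τ = fun u => τ • u - min (id u) 0 from funext (checkFn_eq_mul_sub_min τ)]
  exact (lipschitzWith_smul τ).sub (LipschitzWith.id.min_const 0)

theorem lipschitzWith_checkFn_const_sub (τ e : ℝ) :
    LipschitzWith (‖τ‖₊ + 1) fun t => checkFn τ (e - t) := by
  have h := (lipschitzWith_checkFn τ).comp ((LipschitzWith.const e).sub LipschitzWith.id)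
  rwa [zero_add, mul_one] at h

theorem integrable_checkFn_sub {m : Measure ℝ} [IsFiniteMeasure m]
    (hmom : Integrable (fun e => |e|) m) (τ t : ℝ) :
    Integrable (fun e => checkFn τ (e - t)) m := by
  have hsub : Integrable (fun e => e - t) m :=
    ((integrable_norm_iff aestronglyMeasurable_id).mp hmom).sub (integrable_const t)
  refine Integrable.mono' (hsub.norm.const_mul (‖τ‖₊ + 1 : ℝ))
    ((lipschitzWith_checkFn τ).continuous.comp_aestronglyMeasurable hsub.1) (ae_of_all _ ?_)
  exact fun e => (lipschitzWith_checkFn τ).norm_le_mul (by simp [checkFn]) (e - t)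

theorem hasDerivAt_checkFn (τ : ℝ) {u : ℝ} (hu : u ≠ 0) :
    HasDerivAt (checkFn τ) (τ - if u ≤ 0 then 1 else 0) u := by
  have hlin : HasDerivAt (fun v => v * (τ - if u ≤ 0 then 1 else 0))
      (τ - if u ≤ 0 then 1 else 0) u := by
    simpa using (hasDerivAt_id u).mul_const (τ - if u ≤ 0 then 1 else 0)
  refine hlin.congr_of_eventuallyEq ?_
  rcases hu.lt_or_gt with hneg | hpos
  · filter_upwards [Iio_mem_nhds hneg] with v hv
    simp [checkFn, hneg.le, (Set.mem_Iio.mp hv).le]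
  · filter_upwards [Ioi_mem_nhds hpos] with v hv
    simp [checkFn, not_le.mpr hpos, not_le.mpr (Set.mem_Ioi.mp hv)]

theorem hasDerivAt_checkFn_sub (τ : ℝ) {e t : ℝ} (he : e ≠ t) :
    HasDerivAt (fun s => checkFn τ (e - s)) ((Set.Iic t).indicator 1 e - τ) t := by
  refine ((hasDerivAt_checkFn τ (sub_ne_zero.mpr he)).comp t
    ((hasDerivAt_id t).const_sub e)).congr_deriv ?_
  by_cases het : e ≤ t <;> simp [het]

theorem integral_indicator_one_sub {α : Type*} [MeasurableSpace α] {μ : Measure α}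
    [IsProbabilityMeasure μ] {s : Set α} (hs : MeasurableSet s) (c : ℝ) :
    ∫ x, (s.indicator 1 x - c) ∂μ = μ.real s - c := by
  have hind : Integrable (s.indicator (1 : α → ℝ)) μ := (integrable_const (1 : ℝ)).indicator hs
  rw [integral_sub hind (integrable_const c), integral_indicator_one hs, integral_const,
    probReal_univ, one_smul]

theorem expected_check_loss_deriv_general (τ : ℝ)
    (m : Measure ℝ) [IsProbabilityMeasure m]
    (hmom : Integrable (fun e => |e|) m)
    (t₀ : ℝ) (ht₀ : m {t₀} = 0) :
    HasDerivAt (fun t => ∫ e, checkFn τ (e - t) ∂m)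
      ((m (Set.Iic t₀)).toReal - τ) t₀ := by
  have hderiv : ∀ᵐ e ∂m, HasDerivAt (fun t => checkFn τ (e - t))
      ((Set.Iic t₀).indicator 1 e - τ) t₀ := by
    filter_upwards [measure_eq_zero_iff_ae_notMem.mp ht₀] with e he
    exact hasDerivAt_checkFn_sub τ he
  have hlip : ∀ e, LipschitzOnWith (Real.nnabs (‖τ‖₊ + 1 : NNReal))
      (fun t => checkFn τ (e - t)) Set.univ := fun e =>
    Real.nnabs_coe _ ▸ (lipschitzWith_checkFn_const_sub τ e).lipschitzOnWith
  rw [← measureReal_def, ← integral_indicator_one_sub measurableSet_Iic]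
  exact (hasDerivAt_integral_of_dominated_loc_of_lip Filter.univ_mem
    (Filter.Eventually.of_forall fun t => (integrable_checkFn_sub hmom τ t).1)
    (integrable_checkFn_sub hmom τ t₀)
    ((measurable_one.indicator measurableSet_Iic).sub_const τ).aestronglyMeasurable
    (ae_of_all _ hlip) (integrable_const _) hderiv).2

/-- Differentiability of the one-dimensional expected check loss.  If `m` is
a probability measure on `ℝ` with `∫|e| dm < ∞` and `m({t₀}) = 0`, then
`ψ(t) = ∫ ρ_τ(e − t) dm(e)` is differentiable at `t₀` with `ψ′(t₀) = m((−∞,t₀]) − τ`. -/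
theorem expected_check_loss_deriv (τ : ℝ) (hτ : τ ∈ Set.Ioo (0 : ℝ) 1)
    (m : Measure ℝ) [IsProbabilityMeasure m]
    (hmom : Integrable (fun e => |e|) m)
    (t₀ : ℝ) (ht₀ : m {t₀} = 0) :
    HasDerivAt (fun t => ∫ e, checkFn τ (e - t) ∂m)
      ((m (Set.Iic t₀)).toReal - τ) t₀ :=
  expected_check_loss_deriv_general τ m hmom t₀ ht₀
end

section
/- Lipschitz continuity of the population quantile-regression score: define G(β) := ∫ x (1{y ≤ ⟨x, β⟩} − τ) dμ(x, y) ∈ ℝ^d. Then for all β₁, β₂ ∈ ℝ^d, ‖G(β₁) − G(β₂)‖ ≤ M (∫ ‖x‖² dν(x)) ‖β₁ − β₂‖. -/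
/-!
The scores at `β₁` and `β₂` differ, at a sample `(x, y)`, by `± x` when `y` lies between
`⟪x, β₁⟫` and `⟪x, β₂⟫`, and by `0` otherwise. Integrating first in `y` against `κ x`, the norm of
the difference contributes at most `‖x‖ · M |⟪x, β₁ - β₂⟫| ≤ M ‖x‖² ‖β₁ - β₂‖`, and integrating
this in `x` against `ν` gives the bound. Since `κ x` is a probability measure, the Lipschitz bound
on its CDF forces `M ≥ 0`.
-/

open MeasureTheory ProbabilityTheory
open scoped RealInnerProductSpace ENNReal

lemma nonneg_of_measure_Ioc_le_ofReal {ρ : Measure ℝ} [NeZero ρ] {M : ℝ}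
    (h : ∀ s t, s ≤ t → ρ (Set.Ioc s t) ≤ ENNReal.ofReal (M * (t - s))) : 0 ≤ M := by
  by_contra! hM
  have hnull : ∀ n : ℤ, ρ (Set.Ioc (n : ℝ) (n + 1)) = 0 := fun n =>
    nonpos_iff_eq_zero.1 <|
      (h _ _ (by linarith)).trans_eq (ENNReal.ofReal_eq_zero.2 (by linarith))
  refine NeZero.ne ρ (Measure.measure_univ_eq_zero.1 ?_)
  rw [← iUnion_Ioc_intCast]
  exact measure_iUnion_null hnull

lemma abs_ite_le_sub_ite_le (a b y : ℝ) :
    |(if y ≤ a then (1 : ℝ) else 0) - (if y ≤ b then 1 else 0)|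
      = (Set.Ioc (min a b) (max a b)).indicator 1 y := by
  rcases le_total a b with h | h <;>
    simp only [Set.indicator, Set.mem_Ioc, min_eq_left h, max_eq_right h,
      min_eq_right h, max_eq_left h, Pi.one_apply] <;>
    split_ifs <;> simp_all <;> linarith

lemma integral_abs_ite_le_sub_ite_le_le {ρ : Measure ℝ} {M : ℝ} (hM : 0 ≤ M)
    (h : ∀ s t, s ≤ t → ρ (Set.Ioc s t) ≤ ENNReal.ofReal (M * (t - s))) (a b : ℝ) :
    ∫ y, |(if y ≤ a then (1 : ℝ) else 0) - (if y ≤ b then 1 else 0)| ∂ρ ≤ M * |a - b| := by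
  simp_rw [abs_ite_le_sub_ite_le]
  rw [integral_indicator_one measurableSet_Ioc, ← max_sub_min_eq_abs']
  exact ENNReal.toReal_le_of_le_ofReal (mul_nonneg hM (sub_nonneg.2 min_le_max))
    (h _ _ min_le_max)

section Score

variable {E : Type*} [NormedAddCommGroup E] [InnerProductSpace ℝ E]

noncomputable def qrScore (τ : ℝ) (β : E) (z : E × ℝ) : E :=
  ((if z.2 ≤ ⟪z.1, β⟫ then (1 : ℝ) else 0) - τ) • z.1

lemma integral_norm_qrScore_sub_le {ρ : Measure ℝ} {M : ℝ} (hM : 0 ≤ M)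
    (h : ∀ s t, s ≤ t → ρ (Set.Ioc s t) ≤ ENNReal.ofReal (M * (t - s))) (τ : ℝ) (x β₁ β₂ : E) :
    ∫ y, ‖qrScore τ β₁ (x, y) - qrScore τ β₂ (x, y)‖ ∂ρ ≤ M * ‖x‖ ^ 2 * ‖β₁ - β₂‖ := by
  have hdiff : ∀ y, ‖qrScore τ β₁ (x, y) - qrScore τ β₂ (x, y)‖ =
      |(if y ≤ ⟪x, β₁⟫ then (1 : ℝ) else 0) - (if y ≤ ⟪x, β₂⟫ then 1 else 0)| * ‖x‖ := by
    intro y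
    simp only [qrScore, ← sub_smul, sub_sub_sub_cancel_right, norm_smul, Real.norm_eq_abs]
  have hinner : |⟪x, β₁⟫ - ⟪x, β₂⟫| ≤ ‖x‖ * ‖β₁ - β₂‖ := by
    rw [← inner_sub_right]
    exact abs_real_inner_le_norm _ _
  simp_rw [hdiff]
  rw [integral_mul_const]
  calc _ ≤ M * |⟪x, β₁⟫ - ⟪x, β₂⟫| * ‖x‖ := by
        gcongr
        exact integral_abs_ite_le_sub_ite_le_le hM h _ _
    _ ≤ M * (‖x‖ * ‖β₁ - β₂‖) * ‖x‖ := by gcongr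
    _ = M * ‖x‖ ^ 2 * ‖β₁ - β₂‖ := by ring

variable [MeasurableSpace E] [OpensMeasurableSpace E]

lemma measurableSet_le_inner (β : E) : MeasurableSet {z : E × ℝ | z.2 ≤ ⟪z.1, β⟫} :=
  measurableSet_le measurable_snd
    ((continuous_id.inner continuous_const).measurable.comp measurable_fst)

lemma integrable_qrScore {μ : Measure (E × ℝ)} (hx : Integrable Prod.fst μ) (τ : ℝ) (β : E) :
    Integrable (qrScore τ β) μ := by
  refine hx.bdd_smul (1 + ‖τ‖)
    ((Measurable.ite (measurableSet_le_inner β) measurable_const measurable_const).sub_const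
      τ).aestronglyMeasurable (ae_of_all _ fun z => (norm_sub_le _ _).trans ?_)
  gcongr
  split_ifs <;> simp

end Score

lemma MeasureTheory.Integrable.comp_fst_compProd_s9 {α β F : Type*} [MeasurableSpace α]
    [MeasurableSpace β] [NormedAddCommGroup F] {ν : Measure α} [SFinite ν] {f : α → F}
    (hf : Integrable f ν) (κ : Kernel α β) [IsMarkovKernel κ] :
    Integrable (fun z => f z.1) (ν ⊗ₘ κ) := by
  have hmap : Integrable f ((ν ⊗ₘ κ).map Prod.fst) := by rwa [← Measure.fst, Measure.fst_compProd]
  exact hmap.comp_measurable measurable_fst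

theorem qr_population_score_lipschitz_general (d : ℕ) (τ : ℝ)
    (ν : Measure (EuclideanSpace ℝ (Fin d))) [IsProbabilityMeasure ν]
    (κ : Kernel (EuclideanSpace ℝ (Fin d)) ℝ) [IsMarkovKernel κ]
    (hν2 : Integrable (fun x => ‖x‖ ^ 2) ν)
    (M : ℝ)
    (hLip : ∀ (x : EuclideanSpace ℝ (Fin d)) (s t : ℝ), s ≤ t →
      κ x (Set.Ioc s t) ≤ ENNReal.ofReal (M * (t - s))) :
    ∀ β₁ β₂ : EuclideanSpace ℝ (Fin d),
      ‖(∫ z : EuclideanSpace ℝ (Fin d) × ℝ,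
            ((if z.2 ≤ ⟪z.1, β₁⟫ then (1 : ℝ) else 0) - τ) • z.1 ∂(ν.compProd κ)) -
        (∫ z : EuclideanSpace ℝ (Fin d) × ℝ,
            ((if z.2 ≤ ⟪z.1, β₂⟫ then (1 : ℝ) else 0) - τ) • z.1 ∂(ν.compProd κ))‖
      ≤ M * (∫ x, ‖x‖ ^ 2 ∂ν) * ‖β₁ - β₂‖ := by
  intro β₁ β₂
  have hM : 0 ≤ M := nonneg_of_measure_Ioc_le_ofReal (hLip 0)
  have hx : Integrable id ν :=
    ((memLp_two_iff_integrable_sq_norm aestronglyMeasurable_id).2 hν2).integrable one_le_two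
  have hfst : Integrable Prod.fst (ν ⊗ₘ κ) := hx.comp_fst_compProd_s9 κ
  have hdiff := (integrable_qrScore hfst τ β₁).sub (integrable_qrScore hfst τ β₂)
  change ‖∫ z, qrScore τ β₁ z ∂(ν ⊗ₘ κ) - ∫ z, qrScore τ β₂ z ∂(ν ⊗ₘ κ)‖ ≤ _
  rw [← integral_sub (integrable_qrScore hfst τ β₁) (integrable_qrScore hfst τ β₂)]
  calc _ ≤ ∫ z, ‖qrScore τ β₁ z - qrScore τ β₂ z‖ ∂(ν ⊗ₘ κ) := norm_integral_le_integral_norm _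
    _ = ∫ x, ∫ y, ‖qrScore τ β₁ (x, y) - qrScore τ β₂ (x, y)‖ ∂(κ x) ∂ν :=
        Measure.integral_compProd hdiff.norm
    _ ≤ ∫ x, M * ‖x‖ ^ 2 * ‖β₁ - β₂‖ ∂ν :=
        integral_mono ((Measure.integrable_compProd_iff hdiff.aestronglyMeasurable).1 hdiff).2
          ((hν2.const_mul M).mul_const _)
          fun x => integral_norm_qrScore_sub_le hM (hLip x) τ x β₁ β₂
    _ = M * (∫ x, ‖x‖ ^ 2 ∂ν) * ‖β₁ - β₂‖ := by rw [integral_mul_const, integral_const_mul]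

/-- Lipschitz continuity of the population quantile-regression score
`G(β) = ∫ x (1{y ≤ ⟨x,β⟩} − τ) dμ(x,y)`, `μ = ν ⊗ₖ κ`: if the conditional CDFs are
uniformly `M`-Lipschitz, then `‖G(β₁) − G(β₂)‖ ≤ M (∫‖x‖² dν) ‖β₁ − β₂‖`. -/
theorem qr_population_score_lipschitz (d : ℕ) (τ : ℝ) (hτ : τ ∈ Set.Ioo (0 : ℝ) 1)
    (ν : Measure (EuclideanSpace ℝ (Fin d))) [IsProbabilityMeasure ν]
    (κ : Kernel (EuclideanSpace ℝ (Fin d)) ℝ) [IsMarkovKernel κ]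
    (hν2 : Integrable (fun x => ‖x‖ ^ 2) ν)
    (M : ℝ)
    (hLip : ∀ (x : EuclideanSpace ℝ (Fin d)) (s t : ℝ), s ≤ t →
      κ x (Set.Ioc s t) ≤ ENNReal.ofReal (M * (t - s))) :
    ∀ β₁ β₂ : EuclideanSpace ℝ (Fin d),
      ‖(∫ z : EuclideanSpace ℝ (Fin d) × ℝ,
            ((if z.2 ≤ ⟪z.1, β₁⟫ then (1 : ℝ) else 0) - τ) • z.1 ∂(ν.compProd κ)) -
        (∫ z : EuclideanSpace ℝ (Fin d) × ℝ,
            ((if z.2 ≤ ⟪z.1, β₂⟫ then (1 : ℝ) else 0) - τ) • z.1 ∂(ν.compProd κ))‖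
      ≤ M * (∫ x, ‖x‖ ^ 2 ∂ν) * ‖β₁ - β₂‖ :=
  qr_population_score_lipschitz_general d τ ν κ hν2 M hLip
end

section
/- Second-moment continuity of the quantile-regression subgradient in the parameter: for all β₁, β₂ ∈ ℝ^d, ∫ ‖x‖² | 1{y ≤ ⟨x, β₁⟩} − 1{y ≤ ⟨x, β₂⟩} | dμ(x, y) ≤ M (∫ ‖x‖³ dν(x)) ‖β₁ − β₂‖. In particular, ∫ ‖ x(1{y ≤ ⟨x,β₁⟩} − τ) − x(1{y ≤ ⟨x,β₂⟩} − τ) ‖² dμ ≤ M (∫ ‖x‖³ dν) ‖β₁ − β₂‖. -/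
/-!
The two integrands agree pointwise, since the indicator difference takes values in `{-1, 0, 1}`;
so it suffices to bound the first integral. Conditionally on `x`, the difference
`|1{y ≤ s} − 1{y ≤ t}|` is the indicator of the interval between `s = ⟪x, β₁⟫` and `t = ⟪x, β₂⟫`,
whose `κ x`-mass is at most `M |s − t| ≤ M ‖x‖ ‖β₁ − β₂‖` by the Lipschitz bound and
Cauchy–Schwarz. Integrating `‖x‖² · M ‖x‖ ‖β₁ − β₂‖` against `ν` gives the claim.
-/

open MeasureTheory ProbabilityTheory Set
open scoped RealInnerProductSpace ENNReal Interval

lemma abs_ite_le_sub_ite_le_eq_indicator (y s t : ℝ) :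
    |(if y ≤ s then (1 : ℝ) else 0) - (if y ≤ t then (1 : ℝ) else 0)| = (Ι s t).indicator 1 y := by
  classical
  simp only [indicator_apply, mem_uIoc, Pi.one_apply]
  split_ifs <;> grind

lemma lintegral_ofReal_abs_ite_le_sub_ite_le (ρ : Measure ℝ) (s t : ℝ) :
    ∫⁻ y, ENNReal.ofReal |(if y ≤ s then (1 : ℝ) else 0) - (if y ≤ t then (1 : ℝ) else 0)| ∂ρ
      = ρ (Ι s t) := by
  classical
  simp_rw [abs_ite_le_sub_ite_le_eq_indicator, indicator_apply, Pi.one_apply,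
    apply_ite ENNReal.ofReal, ENNReal.ofReal_one, ENNReal.ofReal_zero]
  exact lintegral_indicator_one measurableSet_uIoc

/-- Keeping `ENNReal.ofReal M` as a separate factor makes the bound valid for `M` of either sign,
since `ENNReal.ofReal (M * a) = ENNReal.ofReal M * ENNReal.ofReal a` whenever `0 ≤ a`. -/
lemma lintegral_ofReal_abs_ite_le_sub_ite_le_le {ρ : Measure ℝ} {M : ℝ}
    (hLip : ∀ s t : ℝ, s ≤ t → ρ (Ioc s t) ≤ ENNReal.ofReal (M * (t - s))) (s t : ℝ) :
    ∫⁻ y, ENNReal.ofReal |(if y ≤ s then (1 : ℝ) else 0) - (if y ≤ t then (1 : ℝ) else 0)| ∂ρ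
      ≤ ENNReal.ofReal M * ENNReal.ofReal |s - t| := by
  rw [lintegral_ofReal_abs_ite_le_sub_ite_le, ← ENNReal.ofReal_mul' (abs_nonneg _),
    ← max_sub_min_eq_abs']
  exact hLip _ _ min_le_max

section InnerProductSpace

variable {E : Type*} [NormedAddCommGroup E] [InnerProductSpace ℝ E]

lemma lintegral_norm_sq_mul_abs_ite_le_inner_sub_ite_le_inner_le {ρ : Measure ℝ} {M : ℝ}
    (hLip : ∀ s t : ℝ, s ≤ t → ρ (Ioc s t) ≤ ENNReal.ofReal (M * (t - s))) (x β₁ β₂ : E) :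
    ∫⁻ y, ENNReal.ofReal (‖x‖ ^ 2 *
        |(if y ≤ ⟪x, β₁⟫ then (1 : ℝ) else 0) - (if y ≤ ⟪x, β₂⟫ then (1 : ℝ) else 0)|) ∂ρ
      ≤ ENNReal.ofReal M * ENNReal.ofReal (‖x‖ ^ 3 * ‖β₁ - β₂‖) := by
  simp_rw [ENNReal.ofReal_mul (sq_nonneg ‖x‖)]
  rw [lintegral_const_mul' _ _ ENNReal.ofReal_ne_top]
  have hCS : |⟪x, β₁⟫ - ⟪x, β₂⟫| ≤ ‖x‖ * ‖β₁ - β₂‖ := by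
    rw [← inner_sub_right]
    exact abs_real_inner_le_norm x _
  calc _ ≤ ENNReal.ofReal (‖x‖ ^ 2) * (ENNReal.ofReal M * ENNReal.ofReal |⟪x, β₁⟫ - ⟪x, β₂⟫|) := by
        gcongr
        exact lintegral_ofReal_abs_ite_le_sub_ite_le_le hLip _ _
    _ ≤ ENNReal.ofReal (‖x‖ ^ 2) * (ENNReal.ofReal M * ENNReal.ofReal (‖x‖ * ‖β₁ - β₂‖)) := by
        gcongr
    _ = ENNReal.ofReal M * ENNReal.ofReal (‖x‖ ^ 3 * ‖β₁ - β₂‖) := by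
        rw [mul_left_comm, ← ENNReal.ofReal_mul (by positivity)]
        ring_nf

variable [MeasurableSpace E] [OpensMeasurableSpace E]

lemma measurable_ite_le_inner (β : E) :
    Measurable fun z : E × ℝ => if z.2 ≤ ⟪z.1, β⟫ then (1 : ℝ) else 0 :=
  Measurable.ite (measurableSet_le measurable_snd
    ((continuous_id.inner continuous_const).measurable.comp measurable_fst))
    measurable_const measurable_const

lemma lintegral_compProd_norm_sq_mul_abs_ite_le_inner_sub_ite_le_inner_le
    {ν : Measure E} [SFinite ν] {κ : Kernel E ℝ} [IsSFiniteKernel κ] {M : ℝ}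
    (hLip : ∀ (x : E) (s t : ℝ), s ≤ t → κ x (Ioc s t) ≤ ENNReal.ofReal (M * (t - s)))
    (hν3 : Integrable (fun x => ‖x‖ ^ 3) ν) (β₁ β₂ : E) :
    ∫⁻ z : E × ℝ, ENNReal.ofReal (‖z.1‖ ^ 2 *
        |(if z.2 ≤ ⟪z.1, β₁⟫ then (1 : ℝ) else 0) - (if z.2 ≤ ⟪z.1, β₂⟫ then (1 : ℝ) else 0)|)
        ∂(ν.compProd κ)
      ≤ ENNReal.ofReal (M * (∫ x, ‖x‖ ^ 3 ∂ν) * ‖β₁ - β₂‖) := by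
  have hmeas : Measurable fun z : E × ℝ => ENNReal.ofReal (‖z.1‖ ^ 2 *
      |(if z.2 ≤ ⟪z.1, β₁⟫ then (1 : ℝ) else 0) - (if z.2 ≤ ⟪z.1, β₂⟫ then (1 : ℝ) else 0)|) :=
    ENNReal.measurable_ofReal.comp ((measurable_fst.norm.pow_const 2).mul
      ((measurable_ite_le_inner β₁).sub (measurable_ite_le_inner β₂)).abs)
  rw [Measure.lintegral_compProd hmeas]
  calc _ ≤ ∫⁻ x, ENNReal.ofReal M * ENNReal.ofReal (‖x‖ ^ 3 * ‖β₁ - β₂‖) ∂ν :=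
        lintegral_mono fun x =>
          lintegral_norm_sq_mul_abs_ite_le_inner_sub_ite_le_inner_le (hLip x) x β₁ β₂
    _ = ENNReal.ofReal M * ENNReal.ofReal (∫ x, ‖x‖ ^ 3 * ‖β₁ - β₂‖ ∂ν) := by
        rw [lintegral_const_mul' _ _ ENNReal.ofReal_ne_top,
          ofReal_integral_eq_lintegral_ofReal (hν3.mul_const _)
            (Filter.Eventually.of_forall fun x => by positivity)]
    _ = ENNReal.ofReal (M * (∫ x, ‖x‖ ^ 3 ∂ν) * ‖β₁ - β₂‖) := by
        rw [integral_mul_const, ← ENNReal.ofReal_mul' (by positivity), mul_assoc]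

end InnerProductSpace

lemma norm_ite_sub_smul_sub_ite_sub_smul_sq {E : Type*} [SeminormedAddCommGroup E]
    [NormedSpace ℝ E] (p q : Prop) [Decidable p] [Decidable q] (τ : ℝ) (x : E) :
    ‖((if p then (1 : ℝ) else 0) - τ) • x - ((if q then (1 : ℝ) else 0) - τ) • x‖ ^ 2
      = ‖x‖ ^ 2 * |(if p then (1 : ℝ) else 0) - (if q then (1 : ℝ) else 0)| := by
  rw [← sub_smul, sub_sub_sub_cancel_right, norm_smul, mul_pow, Real.norm_eq_abs, mul_comm]
  split_ifs <;> norm_num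

theorem qr_subgradient_second_moment_continuity_general (d : ℕ) (τ : ℝ)
    (ν : Measure (EuclideanSpace ℝ (Fin d))) [IsProbabilityMeasure ν]
    (κ : Kernel (EuclideanSpace ℝ (Fin d)) ℝ) [IsMarkovKernel κ]
    (hν3 : Integrable (fun x => ‖x‖ ^ 3) ν)
    (M : ℝ)
    (hLip : ∀ (x : EuclideanSpace ℝ (Fin d)) (s t : ℝ), s ≤ t →
      κ x (Set.Ioc s t) ≤ ENNReal.ofReal (M * (t - s))) :
    ∀ β₁ β₂ : EuclideanSpace ℝ (Fin d),
      (∫⁻ z : EuclideanSpace ℝ (Fin d) × ℝ,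
          ENNReal.ofReal (‖z.1‖ ^ 2 *
            |(if z.2 ≤ ⟪z.1, β₁⟫ then (1 : ℝ) else 0) -
             (if z.2 ≤ ⟪z.1, β₂⟫ then (1 : ℝ) else 0)|) ∂(ν.compProd κ))
        ≤ ENNReal.ofReal (M * (∫ x, ‖x‖ ^ 3 ∂ν) * ‖β₁ - β₂‖) ∧
      (∫⁻ z : EuclideanSpace ℝ (Fin d) × ℝ,
          ENNReal.ofReal (‖((if z.2 ≤ ⟪z.1, β₁⟫ then (1 : ℝ) else 0) - τ) • z.1 -
            ((if z.2 ≤ ⟪z.1, β₂⟫ then (1 : ℝ) else 0) - τ) • z.1‖ ^ 2) ∂(ν.compProd κ))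
        ≤ ENNReal.ofReal (M * (∫ x, ‖x‖ ^ 3 ∂ν) * ‖β₁ - β₂‖) := by
  intro β₁ β₂
  have h := lintegral_compProd_norm_sq_mul_abs_ite_le_inner_sub_ite_le_inner_le hLip hν3 β₁ β₂
  refine ⟨h, ?_⟩
  simpa only [norm_ite_sub_smul_sub_ite_sub_smul_sq] using h

/-- Second-moment continuity of the quantile-regression subgradient in the
parameter: with `μ = ν ⊗ₖ κ` and uniformly `M`-Lipschitz conditional CDFs, for all
`β₁, β₂`, `∫ ‖x‖² |1{y ≤ ⟨x,β₁⟩} − 1{y ≤ ⟨x,β₂⟩}| dμ ≤ M (∫‖x‖³ dν) ‖β₁ − β₂‖`; in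
particular `∫ ‖x(1{y ≤ ⟨x,β₁⟩} − τ) − x(1{y ≤ ⟨x,β₂⟩} − τ)‖² dμ` satisfies the same
bound. -/
theorem qr_subgradient_second_moment_continuity (d : ℕ) (τ : ℝ)
    (hτ : τ ∈ Set.Ioo (0 : ℝ) 1)
    (ν : Measure (EuclideanSpace ℝ (Fin d))) [IsProbabilityMeasure ν]
    (κ : Kernel (EuclideanSpace ℝ (Fin d)) ℝ) [IsMarkovKernel κ]
    (hν3 : Integrable (fun x => ‖x‖ ^ 3) ν)
    (M : ℝ)
    (hLip : ∀ (x : EuclideanSpace ℝ (Fin d)) (s t : ℝ), s ≤ t →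
      κ x (Set.Ioc s t) ≤ ENNReal.ofReal (M * (t - s))) :
    ∀ β₁ β₂ : EuclideanSpace ℝ (Fin d),
      (∫⁻ z : EuclideanSpace ℝ (Fin d) × ℝ,
          ENNReal.ofReal (‖z.1‖ ^ 2 *
            |(if z.2 ≤ ⟪z.1, β₁⟫ then (1 : ℝ) else 0) -
             (if z.2 ≤ ⟪z.1, β₂⟫ then (1 : ℝ) else 0)|) ∂(ν.compProd κ))
        ≤ ENNReal.ofReal (M * (∫ x, ‖x‖ ^ 3 ∂ν) * ‖β₁ - β₂‖) ∧
      (∫⁻ z : EuclideanSpace ℝ (Fin d) × ℝ,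
          ENNReal.ofReal (‖((if z.2 ≤ ⟪z.1, β₁⟫ then (1 : ℝ) else 0) - τ) • z.1 -
            ((if z.2 ≤ ⟪z.1, β₂⟫ then (1 : ℝ) else 0) - τ) • z.1‖ ^ 2) ∂(ν.compProd κ))
        ≤ ENNReal.ofReal (M * (∫ x, ‖x‖ ^ 3 ∂ν) * ‖β₁ - β₂‖) :=
  qr_subgradient_second_moment_continuity_general d τ ν κ hν3 M hLip
end
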